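/- arXiv:2111.04802 — 2 statements merged into one kernel-verified Lean document; each statement's English description precedes it below -/
import Mathlib

section
/- Let (X, P) be a finite poset partitioned into three sets S_1, S_2, S_3 such that S_2 < S_3 < S_1 in P except for a distinguished subset C ⊆ S_1 ∪ S_2 which is completely incomparable to S_3. Suppose there exist linear orders L_1, L_2 on X such that L_1 ∩ L_2 restricted to each of S_1 ∪ S_2 and S_3 equals P restricted to those sets, with S_2 < C ∩ S_1 < S_3 < S_1 \ C in L_1 and S_2 \ C < S_3 < C ∩ S_2 < S_1 in L_2 (where C ∩ S_2 < S_1 holds since C ∩ S_2 ⊆ S_2), and where all elements of C ∩ S_1 are below all of S_1 \ C in L_1 and all elements of C ∩ S_2 are above all of S_2 \ C in L_2. Then L_1 ∩ L_2 = P, so dim(X, P) ≤ 2. -/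
/-!
Inside `S₁ ∪ S₂` and inside `S₃` the intersection `L₁ ∩ L₂` is `P` by assumption, so only pairs
`u ∈ S₁ ∪ S₂`, `y ∈ S₃` matter. If `u ∉ C` the pair is comparable in `P` and the block orders put
it the same way round in both `L₁` and `L₂`; if `u ∈ C` it is incomparable, and `L₁` puts `u`
below `y` while `L₂` puts `y` below `u`.
-/

section PairRealizer

variable {α : Type*} {P l₁ l₂ : α → α → Prop} {a b : α}

theorem rel_iff_and_of_comparable [Std.Antisymm P] [Std.Antisymm l₁] (hne : a ≠ b)
    (hP : P a b) (h₁ : l₁ a b) (h₂ : l₂ a b) :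
    (P a b ↔ l₁ a b ∧ l₂ a b) ∧ (P b a ↔ l₁ b a ∧ l₂ b a) :=
  ⟨iff_of_true hP ⟨h₁, h₂⟩,
    iff_of_false (fun h => hne (antisymm hP h)) (fun h => hne (antisymm h₁ h.1))⟩

theorem rel_iff_and_of_incomparable [Std.Antisymm l₁] [Std.Antisymm l₂] (hne : a ≠ b)
    (hab : ¬ P a b) (hba : ¬ P b a) (h₁ : l₁ a b) (h₂ : l₂ b a) :
    (P a b ↔ l₁ a b ∧ l₂ a b) ∧ (P b a ↔ l₁ b a ∧ l₂ b a) :=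
  ⟨iff_of_false hab (fun h => hne (antisymm h.2 h₂)),
    iff_of_false hba (fun h => hne (antisymm h₁ h.1))⟩

end PairRealizer

theorem stmt6_general {X : Type*}
    (P : X → X → Prop) (hPo : IsPartialOrder X P)
    (S₁ S₂ S₃ C : Set X)
    (hcover : S₁ ∪ S₂ ∪ S₃ = Set.univ)
    (h23 : ∀ x ∈ S₂ \ C, ∀ y ∈ S₃, P x y)
    (h31 : ∀ y ∈ S₃, ∀ z ∈ S₁ \ C, P y z)
    (hinc : ∀ u ∈ C, ∀ y ∈ S₃, ¬ P u y ∧ ¬ P y u)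
    (l₁ l₂ : X → X → Prop) (hl₁ : IsLinearOrder X l₁) (hl₂ : IsLinearOrder X l₂)
    (hres12 : ∀ x ∈ S₁ ∪ S₂, ∀ y ∈ S₁ ∪ S₂, (l₁ x y ∧ l₂ x y ↔ P x y))
    (hres3 : ∀ x ∈ S₃, ∀ y ∈ S₃, (l₁ x y ∧ l₂ x y ↔ P x y))
    (hblocks1 : ∀ i j : Fin 4, i < j →
      ∀ x ∈ (![S₂, C ∩ S₁, S₃, S₁ \ C] : Fin 4 → Set X) i,
        ∀ y ∈ (![S₂, C ∩ S₁, S₃, S₁ \ C] : Fin 4 → Set X) j, l₁ x y ∧ x ≠ y)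
    (hblocks2 : ∀ i j : Fin 4, i < j →
      ∀ x ∈ (![S₂ \ C, S₃, C ∩ S₂, S₁] : Fin 4 → Set X) i,
        ∀ y ∈ (![S₂ \ C, S₃, C ∩ S₂, S₁] : Fin 4 → Set X) j, l₂ x y ∧ x ≠ y) :
    ∀ x y, P x y ↔ l₁ x y ∧ l₂ x y := by
  have cross : ∀ u ∈ S₁ ∪ S₂, ∀ y ∈ S₃,
      (P u y ↔ l₁ u y ∧ l₂ u y) ∧ (P y u ↔ l₁ y u ∧ l₂ y u) := by
    intro u hu y hy
    by_cases huC : u ∈ C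
    · have h₁ : l₁ u y ∧ u ≠ y := hu.elim
        (fun hu₁ => hblocks1 1 2 (by decide) u ⟨huC, hu₁⟩ y hy)
        (fun hu₂ => hblocks1 0 2 (by decide) u hu₂ y hy)
      have h₂ : l₂ y u := hu.elim
        (fun hu₁ => (hblocks2 1 3 (by decide) y hy u hu₁).1)
        (fun hu₂ => (hblocks2 1 2 (by decide) y hy u ⟨huC, hu₂⟩).1)
      exact rel_iff_and_of_incomparable h₁.2 (hinc u huC y hy).1 (hinc u huC y hy).2 h₁.1 h₂
    rcases hu with hu₁ | hu₂
    · have h₁ := hblocks1 2 3 (by decide) y hy u ⟨hu₁, huC⟩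
      have h₂ := hblocks2 1 3 (by decide) y hy u hu₁
      exact (rel_iff_and_of_comparable h₁.2 (h31 y hy u ⟨hu₁, huC⟩) h₁.1 h₂.1).symm
    · have h₁ := hblocks1 0 2 (by decide) u hu₂ y hy
      have h₂ := hblocks2 0 1 (by decide) u ⟨hu₂, huC⟩ y hy
      exact rel_iff_and_of_comparable h₁.2 (h23 u ⟨hu₂, huC⟩ y hy) h₁.1 h₂.1
  have hmem : ∀ x, x ∈ S₁ ∪ S₂ ∨ x ∈ S₃ := fun x => (hcover ▸ Set.mem_univ x : x ∈ S₁ ∪ S₂ ∪ S₃)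
  intro x y
  rcases hmem x with hx | hx <;> rcases hmem y with hy | hy
  · exact (hres12 x hx y hy).symm
  · exact (cross x hx y hy).1
  · exact (cross y hy x hx).2
  · exact (hres3 x hx y hy).symm

theorem stmt6 {X : Type*} [Fintype X]
    (P : X → X → Prop) (hPo : IsPartialOrder X P)
    (S₁ S₂ S₃ C : Set X)
    (hcover : S₁ ∪ S₂ ∪ S₃ = Set.univ)
    (hd12 : Disjoint S₁ S₂) (hd13 : Disjoint S₁ S₃) (hd23 : Disjoint S₂ S₃)
    (hC : C ⊆ S₁ ∪ S₂)
    (h23 : ∀ x ∈ S₂ \ C, ∀ y ∈ S₃, P x y)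
    (h31 : ∀ y ∈ S₃, ∀ z ∈ S₁ \ C, P y z)
    (hinc : ∀ u ∈ C, ∀ y ∈ S₃, ¬ P u y ∧ ¬ P y u)
    (l₁ l₂ : X → X → Prop) (hl₁ : IsLinearOrder X l₁) (hl₂ : IsLinearOrder X l₂)
    (hres12 : ∀ x ∈ S₁ ∪ S₂, ∀ y ∈ S₁ ∪ S₂, (l₁ x y ∧ l₂ x y ↔ P x y))
    (hres3 : ∀ x ∈ S₃, ∀ y ∈ S₃, (l₁ x y ∧ l₂ x y ↔ P x y))
    (hblocks1 : ∀ i j : Fin 4, i < j →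
      ∀ x ∈ (![S₂, C ∩ S₁, S₃, S₁ \ C] : Fin 4 → Set X) i,
        ∀ y ∈ (![S₂, C ∩ S₁, S₃, S₁ \ C] : Fin 4 → Set X) j, l₁ x y ∧ x ≠ y)
    (hblocks2 : ∀ i j : Fin 4, i < j →
      ∀ x ∈ (![S₂ \ C, S₃, C ∩ S₂, S₁] : Fin 4 → Set X) i,
        ∀ y ∈ (![S₂ \ C, S₃, C ∩ S₂, S₁] : Fin 4 → Set X) j, l₂ x y ∧ x ≠ y) :
    ∀ x y, P x y ↔ l₁ x y ∧ l₂ x y :=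
  stmt6_general P hPo S₁ S₂ S₃ C hcover h23 h31 hinc l₁ l₂ hl₁ hl₂ hres12 hres3 hblocks1 hblocks2
end

section
/- Let w ≥ 1 and let C_1, …, C_w be pairwise disjoint sets with |C_i| = i, colored injectively on their union by c (so the union has w(w+1)/2 distinct colors), and let D be a set of w colors. Then there exists t with 1 ≤ t ≤ w such that |c(C_t) ∪ D| > 2w - √(2w), i.e., the number of colors of C_t not in D is greater than w - √(2w). -/
theorem stmt13 {β α : Type*} [DecidableEq α] [DecidableEq β] (w : ℕ) (hw : 1 ≤ w)
    (C : ℕ → Finset β) (c : β → α) (D : Finset α)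
    (hdisj : ∀ i ∈ Finset.Icc 1 w, ∀ j ∈ Finset.Icc 1 w, i ≠ j → Disjoint (C i) (C j))
    (hcard : ∀ i ∈ Finset.Icc 1 w, (C i).card = i)
    (hinj : Set.InjOn c ↑((Finset.Icc 1 w).biUnion C))
    (hD : D.card = w) :
    ∃ t ∈ Finset.Icc 1 w,
      ((((C t).image c) ∪ D).card : ℝ) > 2 * (w : ℝ) - Real.sqrt (2 * (w : ℝ)) := by
  by_contra hcon
  push_neg at hcon
  rcases eq_or_lt_of_le hw with rfl | hw2
  · have h := hcon 1 (by simp)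
    have hge : (1 : ℝ) ≤ ((Finset.image c (C 1) ∪ D).card : ℝ) := by
      have : D.card ≤ (Finset.image c (C 1) ∪ D).card :=
        Finset.card_le_card Finset.subset_union_right
      rw [hD] at this
      exact_mod_cast this
    have hs2 : (1 : ℝ) < Real.sqrt (2 * ((1 : ℕ) : ℝ)) := by
      rw [show (2 * ((1 : ℕ) : ℝ)) = 2 by norm_num]
      rw [show (1 : ℝ) = Real.sqrt 1 by simp]
      exact Real.sqrt_lt_sqrt (by norm_num) (by norm_num)
    rw [Nat.cast_one] at h hs2
    linarith
  set f : ℝ := Real.sqrt (2 * (w : ℝ)) with hfdef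
  have hwR : (1 : ℝ) ≤ (w : ℝ) := by exact_mod_cast hw
  have hfnn : 0 ≤ f := Real.sqrt_nonneg _
  have hf2 : f ^ 2 = 2 * (w : ℝ) := Real.sq_sqrt (by positivity)
  have hfpos : 0 < f := by nlinarith
  -- image cardinalities
  have himg : ∀ t ∈ Finset.Icc 1 w, ((C t).image c).card = t := by
    intro t ht
    rw [Finset.card_image_of_injOn (hinj.mono ?_), hcard t ht]
    intro x hx
    exact Finset.mem_coe.mpr (Finset.mem_biUnion.mpr ⟨t, ht, hx⟩)
  -- per-t lower bound on k t
  set k : ℕ → ℕ := fun t => (((C t).image c) ∩ D).card with hk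
  have hkb : ∀ t ∈ Finset.Icc 1 w, (t : ℝ) - w + f ≤ (k t : ℝ) := by
    intro t ht
    have h1 := hcon t ht
    have h2 : (((C t).image c) ∪ D).card + k t = t + w := by
      rw [hk]
      have := Finset.card_union_add_card_inter ((C t).image c) D
      rw [himg t ht, hD] at this
      exact this
    have h2R : ((((C t).image c) ∪ D).card : ℝ) + (k t : ℝ) = (t : ℝ) + w := by
      exact_mod_cast h2
    linarith
  -- images are pairwise disjoint
  have hid : ∀ i ∈ Finset.Icc 1 w, ∀ j ∈ Finset.Icc 1 w, i ≠ j →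
      Disjoint (((C i).image c) ∩ D) (((C j).image c) ∩ D) := by
    intro i hi j hj hij
    rw [Finset.disjoint_left]
    intro a hai haj
    obtain ⟨x, hx, hxa⟩ := Finset.mem_image.mp (Finset.mem_inter.mp hai).1
    obtain ⟨y, hy, hya⟩ := Finset.mem_image.mp (Finset.mem_inter.mp haj).1
    have hxU : x ∈ ((Finset.Icc 1 w).biUnion C : Finset β) :=
      Finset.mem_biUnion.mpr ⟨i, hi, hx⟩
    have hyU : y ∈ ((Finset.Icc 1 w).biUnion C : Finset β) :=
      Finset.mem_biUnion.mpr ⟨j, hj, hy⟩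
    have hxy : x = y := hinj (Finset.mem_coe.mpr hxU) (Finset.mem_coe.mpr hyU)
      (by rw [hxa, hya])
    exact Finset.disjoint_left.mp (hdisj i hi j hj hij) hx (hxy ▸ hy)
  -- total bound on sum of k
  have hsum : ∑ t ∈ Finset.Icc 1 w, k t ≤ w := by
    rw [← Finset.card_biUnion hid, ← hD]
    apply Finset.card_le_card
    intro a ha
    obtain ⟨t, _, hta⟩ := Finset.mem_biUnion.mp ha
    exact (Finset.mem_inter.mp hta).2
  -- s = ceil of f
  set s : ℕ := ⌈f⌉₊ with hsdef
  have hsf : f ≤ (s : ℝ) := Nat.le_ceil f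
  have hsf1 : (s : ℝ) - 1 < f := by
    have := Nat.ceil_lt_add_one hfnn
    linarith
  have hwR2 : (2 : ℝ) ≤ (w : ℝ) := by exact_mod_cast hw2
  have hsw : s ≤ w := by
    apply Nat.ceil_le.mpr
    nlinarith
  have hs1 : 1 ≤ s := Nat.ceil_pos.mpr hfpos
  -- the top-range index set
  have hmem : ∀ j ∈ Finset.range s, w - j ∈ Finset.Icc 1 w := by
    intro j hj
    have := Finset.mem_range.mp hj
    simp only [Finset.mem_Icc]
    omega
  have hinj2 : ∀ j1 ∈ Finset.range s, ∀ j2 ∈ Finset.range s,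
      w - j1 = w - j2 → j1 = j2 := by
    intro j1 h1 j2 h2 h
    have := Finset.mem_range.mp h1
    have := Finset.mem_range.mp h2
    omega
  have hsub : (Finset.range s).image (fun j => w - j) ⊆ Finset.Icc 1 w := by
    intro t ht
    obtain ⟨j, hj, rfl⟩ := Finset.mem_image.mp ht
    exact hmem j hj
  have hsum2 : ∑ j ∈ Finset.range s, k (w - j) ≤ w := by
    calc ∑ j ∈ Finset.range s, k (w - j)
        = ∑ t ∈ (Finset.range s).image (fun j => w - j), k t :=
          (Finset.sum_image hinj2).symm
      _ ≤ ∑ t ∈ Finset.Icc 1 w, k t :=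
          Finset.sum_le_sum_of_subset hsub
      _ ≤ w := hsum
  have hsum2R : (∑ j ∈ Finset.range s, (k (w - j) : ℝ)) ≤ (w : ℝ) := by
    rw [← Nat.cast_sum]
    exact_mod_cast hsum2
  -- lower bound the sum
  have hlow : ∑ j ∈ Finset.range s, (f - (j : ℝ)) ≤
      ∑ j ∈ Finset.range s, (k (w - j) : ℝ) := by
    apply Finset.sum_le_sum
    intro j hj
    have hjw : j ≤ w := le_trans (le_of_lt (Finset.mem_range.mp hj)) hsw
    have := hkb (w - j) (hmem j hj)
    have hcast : ((w - j : ℕ) : ℝ) = (w : ℝ) - (j : ℝ) := by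
      rw [Nat.cast_sub hjw]
    rw [hcast] at this
    linarith
  have hgauss : ∑ j ∈ Finset.range s, (f - (j : ℝ)) =
      s * f - s * (s - 1) / 2 := by
    rw [Finset.sum_sub_distrib, Finset.sum_const, Finset.card_range]
    have : ∑ j ∈ Finset.range s, (j : ℝ) = s * (s - 1) / 2 := by
      induction s with
      | zero => simp
      | succ n ih =>
        rw [Finset.sum_range_succ, ih]
        push_cast
        ring
    rw [this]
    ring
  rw [hgauss] at hlow
  have hfinal : (w : ℝ) < s * f - s * (s - 1) / 2 := by
    have hspos : (0 : ℝ) < s := by exact_mod_cast hs1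
    nlinarith [mul_nonneg hfnn (sub_nonneg.mpr hsf), mul_pos hspos (sub_pos.mpr hsf1)]
  linarith
end
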